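/- Let G₁ = (V, E₁, w) and G₂ = (V, E₂, w) be weighted graphs on the same vertex set with distinct edge weights, and let F₁, F₂ be their minimum spanning forests. Then the minimum spanning forest of (V, E₁ ∪ E₂) equals the minimum spanning forest of (V, F₁ ∪ F₂). -/

import Mathlib

/-- `F` is a spanning forest of the graph with edge set `E`: it is a subset of `E`,
acyclic, and has the same reachability relation as `E`. -/
def IsSpanningForest (V : Type) (E F : Finset (Sym2 V)) : Prop :=
  F ⊆ E ∧ (SimpleGraph.fromEdgeSet (↑F : Set (Sym2 V))).IsAcyclic ∧
    ∀ u v : V, (SimpleGraph.fromEdgeSet (↑E : Set (Sym2 V))).Reachable u v ↔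
      (SimpleGraph.fromEdgeSet (↑F : Set (Sym2 V))).Reachable u v

/-- `F` is a minimum spanning forest of the graph with edge set `E` and weights `w`. -/
def IsMSF (V : Type) (w : Sym2 V → ℝ) (E F : Finset (Sym2 V)) : Prop :=
  IsSpanningForest V E F ∧
    ∀ F' : Finset (Sym2 V), IsSpanningForest V E F' → ∑ e ∈ F, w e ≤ ∑ e ∈ F', w e


/-!
Call `E' ⊆ E` a sparsification of `E` when every edge `uv` of `E` outside `E'` is spanned by
edges of `E'` strictly lighter than `uv`. Such discarded edges are useless: a spanning forest
using one can exchange it, across the cut it defines, for a lighter edge of `E'`. Hence `E` and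
`E'` have the same minimum spanning forests. By the cycle property, every edge of `Eᵢ` outside
the minimum spanning forest `Fᵢ` is spanned by lighter edges of `Fᵢ`, so `F₁ ∪ F₂` is a
sparsification of `E₁ ∪ E₂`.
-/

open SimpleGraph Finset

namespace SimpleGraph

variable {V : Type*} {G H K : SimpleGraph V} {u v a b x y : V}

theorem Reachable.iff_of_forall_adj {P : V → Prop}
    (hP : ∀ ⦃x y⦄, G.Adj x y → (P x ↔ P y)) (h : G.Reachable u v) : P u ↔ P v := by
  obtain ⟨p⟩ := h
  induction p with
  | nil => rfl
  | cons hadj _ ih => exact (hP hadj).trans ih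

theorem Reachable.of_forall_adj (hGH : ∀ ⦃x y⦄, G.Adj x y → H.Reachable x y)
    (h : G.Reachable u v) : H.Reachable u v :=
  (h.iff_of_forall_adj (P := H.Reachable u) fun _ _ hxy =>
    ⟨(·.trans (hGH hxy)), (·.trans (hGH hxy).symm)⟩).mp .rfl

theorem Reachable.of_sup_edge (h : (K ⊔ edge a b).Reachable x y) (hKH : K ≤ H)
    (hab : H.Reachable a b) : H.Reachable x y := by
  refine h.of_forall_adj fun y z hyz => ?_
  rcases hyz with hyz | hyz
  · exact hyz.reachable.mono hKH
  · rcases (edge_adj a b y z).mp hyz with ⟨⟨rfl, rfl⟩ | ⟨rfl, rfl⟩, -⟩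
    exacts [hab, hab.symm]

theorem Reachable.reachable_iff_of_sup_edge (h : (K ⊔ edge a b).Reachable u v)
    (hab : K.Reachable x a ↔ K.Reachable x b) : K.Reachable x u ↔ K.Reachable x v := by
  refine h.iff_of_forall_adj fun y z hyz => ?_
  rcases hyz with hyz | hyz
  · exact ⟨(·.trans hyz.reachable), (·.trans hyz.reachable.symm)⟩
  · rcases (edge_adj a b y z).mp hyz with ⟨⟨rfl, rfl⟩ | ⟨rfl, rfl⟩, -⟩
    exacts [hab, hab.symm]

theorem Reachable.sup_edge_swap (h : (K ⊔ edge a b).Reachable u v) (hK : ¬K.Reachable u v) :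
    (K ⊔ edge u v).Reachable a b := by
  have hu : ¬(K.Reachable u a ↔ K.Reachable u b) := fun hab =>
    hK ((h.reachable_iff_of_sup_edge hab).mp .rfl)
  have hv : ¬(K.Reachable v a ↔ K.Reachable v b) := fun hab =>
    hK ((h.reachable_iff_of_sup_edge hab).mpr .rfl).symm
  have ha : K.Reachable u a → ¬K.Reachable v a := fun h h' => hK (h.trans h'.symm)
  have hb : K.Reachable u b → ¬K.Reachable v b := fun h h' => hK (h.trans h'.symm)
  have hne : u ≠ v := fun h => hK (h ▸ .rfl)
  have huv : (K ⊔ edge u v).Reachable u v :=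
    Adj.reachable (Or.inr ((edge_adj u v u v).mpr ⟨Or.inl ⟨rfl, rfl⟩, hne⟩))
  have hle : K ≤ K ⊔ edge u v := le_sup_left
  -- `a` and `b` lie one in the `K`-component of `u`, the other in that of `v`
  have : (K.Reachable u a ∧ K.Reachable v b) ∨ (K.Reachable u b ∧ K.Reachable v a) := by tauto
  rcases this with ⟨hua, hvb⟩ | ⟨hub, hva⟩
  · exact ((hua.mono hle).symm.trans huv).trans (hvb.mono hle)
  · exact ((hva.mono hle).symm.trans huv.symm).trans (hub.mono hle)

theorem IsAcyclic.not_reachable_deleteEdges_of_mem_edges (hG : G.IsAcyclic) {p : G.Walk u v}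
    (hp : p.IsPath) (he : s(a, b) ∈ p.edges) : ¬(G.deleteEdges {s(a, b)}).Reachable u v := by
  classical
  rw [reachable_deleteEdges_iff_exists_walk]
  rintro ⟨q, hq⟩
  have : q.bypass = p := congrArg Subtype.val
    ((hG.subsingleton_path u v).elim ⟨q.bypass, q.bypass_isPath⟩ ⟨p, hp⟩)
  exact hq (q.edges_bypass_subset_edges (this ▸ he))

theorem fromEdgeSet_coe_erase [DecidableEq V] (F : Finset (Sym2 V)) (e : Sym2 V) :
    fromEdgeSet ↑(F.erase e) = (fromEdgeSet ↑F).deleteEdges {e} := by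
  rw [coe_erase, fromEdgeSet_sdiff]
  rfl

theorem fromEdgeSet_coe_insert [DecidableEq V] (F : Finset (Sym2 V)) (u v : V) :
    fromEdgeSet ↑(insert s(u, v) F) = fromEdgeSet ↑F ⊔ edge u v := by
  rw [coe_insert, Set.insert_eq, fromEdgeSet_union, sup_comm]
  rfl

end SimpleGraph

theorem Finset.sum_insert_erase_lt {α M : Type*} [DecidableEq α] [AddCommMonoid M]
    [PartialOrder M] [IsOrderedCancelAddMonoid M] {F : Finset α} {w : α → M} {e f : α}
    (he : e ∉ F.erase f) (hf : f ∈ F) (hw : w e < w f) :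
    ∑ x ∈ insert e (F.erase f), w x < ∑ x ∈ F, w x := by
  rw [sum_insert he, ← add_sum_erase F w hf]
  exact add_lt_add_left hw _

variable {V : Type} [DecidableEq V] {u v a b : V}

theorem IsSpanningForest.insert_erase {E F : Finset (Sym2 V)} (hF : IsSpanningForest V E F)
    (hab : s(a, b) ∈ F) (huv : s(u, v) ∈ E)
    (hsep : ¬(fromEdgeSet ↑(F.erase s(a, b))).Reachable u v) :
    IsSpanningForest V E (insert s(u, v) (F.erase s(a, b))) := by
  obtain ⟨hFE, hacyc, hreach⟩ := hF
  set K : SimpleGraph V := fromEdgeSet ↑(F.erase s(a, b))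
  have hFK : fromEdgeSet ↑F = K ⊔ edge a b := by
    rw [← fromEdgeSet_coe_insert, Finset.insert_erase hab]
  have hsub : insert s(u, v) (F.erase s(a, b)) ⊆ E :=
    insert_subset huv ((erase_subset _ _).trans hFE)
  have hne : u ≠ v := fun h => hsep (h ▸ .rfl)
  have hKuv : (K ⊔ edge a b).Reachable u v :=
    hFK ▸ (hreach u v).mp (Adj.reachable ((fromEdgeSet_adj _).mpr ⟨huv, hne⟩))
  refine ⟨hsub, ?_, fun x y => ⟨fun h => ?_, fun h => ?_⟩⟩
  · rw [fromEdgeSet_coe_insert]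
    exact (hacyc.anti (hFK ▸ le_sup_left)).sup_edge_of_not_reachable hsep
  · rw [hreach, hFK] at h
    rw [fromEdgeSet_coe_insert]
    exact h.of_sup_edge le_sup_left (hKuv.sup_edge_swap hsep)
  · exact h.mono (fromEdgeSet_mono (coe_subset.mpr hsub))

/-- Cycle property. -/
theorem IsMSF.reachable_lighter {w : Sym2 V → ℝ} {E F : Finset (Sym2 V)} (hF : IsMSF V w E F)
    (hinj : Set.InjOn w ↑E) (he : s(u, v) ∈ E) (heF : s(u, v) ∉ F) :
    (fromEdgeSet {f | f ∈ F ∧ w f < w s(u, v)}).Reachable u v := by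
  by_contra hL
  have hne : u ≠ v := fun h => hL (h ▸ .rfl)
  obtain ⟨p, hp⟩ :=
    ((hF.1.2.2 u v).mp ((fromEdgeSet_adj _).mpr ⟨he, hne⟩).reachable).exists_isPath
  -- a heavy edge on the forest path from `u` to `v`
  obtain ⟨⟨⟨a, b⟩, hab⟩, hd, ha, hb⟩ :=
    p.exists_boundary_dart {x | (fromEdgeSet _).Reachable u x} .rfl hL
  obtain ⟨habF, hne'⟩ : s(a, b) ∈ F ∧ a ≠ b := hab
  have hw : w s(u, v) < w s(a, b) := by
    refine lt_of_le_of_ne (not_lt.mp fun hlt => hb (ha.trans ?_)) fun h => heF ?_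
    · have : (fromEdgeSet {f | f ∈ F ∧ w f < w s(u, v)}).Adj a b := ⟨⟨habF, hlt⟩, hne'⟩
      exact this.reachable
    · rwa [hinj he (hF.1.1 habF) h]
  have hsep : ¬(fromEdgeSet ↑(F.erase s(a, b))).Reachable u v := by
    rw [fromEdgeSet_coe_erase]
    exact hF.1.2.1.not_reachable_deleteEdges_of_mem_edges hp (List.mem_map_of_mem hd)
  exact (hF.2 _ (hF.1.insert_erase habF he hsep)).not_gt
    (sum_insert_erase_lt (fun h => heF (mem_of_mem_erase h)) habF hw)

section Sparsification

variable {w : Sym2 V → ℝ} {E E' F : Finset (Sym2 V)}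

theorem reachable_iff_of_reachable_lighter (hE' : E' ⊆ E)
    (hlight : ∀ ⦃u v⦄, s(u, v) ∈ E → s(u, v) ∉ E' →
      (fromEdgeSet {f | f ∈ E' ∧ w f < w s(u, v)}).Reachable u v) :
    (fromEdgeSet ↑E).Reachable u v ↔ (fromEdgeSet ↑E').Reachable u v := by
  refine ⟨fun h => h.of_forall_adj fun x y hxy => ?_,
    fun h => h.mono (fromEdgeSet_mono (coe_subset.mpr hE'))⟩
  by_cases hxyE' : s(x, y) ∈ E'
  · exact ((fromEdgeSet_adj _).mpr ⟨hxyE', hxy.2⟩).reachable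
  · exact (hlight hxy.1 hxyE').mono (fromEdgeSet_mono fun f hf => hf.1)

theorem isSpanningForest_iff_of_reachable_lighter (hE' : E' ⊆ E)
    (hlight : ∀ ⦃u v⦄, s(u, v) ∈ E → s(u, v) ∉ E' →
      (fromEdgeSet {f | f ∈ E' ∧ w f < w s(u, v)}).Reachable u v) :
    IsSpanningForest V E' F ↔ F ⊆ E' ∧ IsSpanningForest V E F := by
  simp only [IsSpanningForest, reachable_iff_of_reachable_lighter hE' hlight]
  exact ⟨fun ⟨h, hacyc, hreach⟩ => ⟨h, h.trans hE', hacyc, hreach⟩,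
    fun ⟨h, _, hacyc, hreach⟩ => ⟨h, hacyc, hreach⟩⟩

/-- The lighter path in `E'` between the endpoints of `e` crosses the cut that `e` defines in
the forest; the crossing edge replaces `e`. -/
theorem IsSpanningForest.exists_lighter_exchange (hE' : E' ⊆ E) (hnd : ∀ e ∈ E, ¬e.IsDiag)
    (hlight : ∀ ⦃u v⦄, s(u, v) ∈ E → s(u, v) ∉ E' →
      (fromEdgeSet {f | f ∈ E' ∧ w f < w s(u, v)}).Reachable u v)
    (hF : IsSpanningForest V E F) {e : Sym2 V} (heF : e ∈ F) (heE' : e ∉ E') :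
    ∃ g ∈ E', g ∉ F.erase e ∧ w g < w e ∧
      IsSpanningForest V E (insert g (F.erase e)) := by
  induction e using Sym2.ind with | _ u v => ?_
  have hadj : (fromEdgeSet ↑F).Adj u v :=
    ⟨heF, fun h => hnd _ (hF.1 heF) (Sym2.mk_isDiag_iff.mpr h)⟩
  have hsep : ¬(fromEdgeSet ↑(F.erase s(u, v))).Reachable u v := by
    rw [fromEdgeSet_coe_erase, ← isBridge_iff]
    exact isAcyclic_iff_forall_adj_isBridge.mp hF.2.1 hadj
  obtain ⟨p⟩ := hlight (hF.1 heF) heE'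
  obtain ⟨⟨⟨a, b⟩, hab⟩, -, ha, hb⟩ :=
    p.exists_boundary_dart {x | (fromEdgeSet _).Reachable u x} .rfl hsep
  obtain ⟨⟨habE', hw⟩, hne⟩ : (s(a, b) ∈ E' ∧ w s(a, b) < w s(u, v)) ∧ a ≠ b := hab
  have hsep' : ¬(fromEdgeSet ↑(F.erase s(u, v))).Reachable a b := fun h => hb (ha.trans h)
  exact ⟨s(a, b), habE', fun h => hsep' ((fromEdgeSet_adj _).mpr ⟨h, hne⟩).reachable, hw,
    hF.insert_erase heF (hE' habE') hsep'⟩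

theorem IsSpanningForest.exists_subset_sum_le (hE' : E' ⊆ E) (hnd : ∀ e ∈ E, ¬e.IsDiag)
    (hlight : ∀ ⦃u v⦄, s(u, v) ∈ E → s(u, v) ∉ E' →
      (fromEdgeSet {f | f ∈ E' ∧ w f < w s(u, v)}).Reachable u v)
    (hF : IsSpanningForest V E F) :
    ∃ F₀ ⊆ E', IsSpanningForest V E F₀ ∧ ∑ e ∈ F₀, w e ≤ ∑ e ∈ F, w e := by
  induction h : #(F \ E') using Nat.strong_induction_on generalizing F with | _ n ih => ?_
  by_cases hsub : F ⊆ E'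
  · exact ⟨F, hsub, hF, le_rfl⟩
  obtain ⟨e, heF, heE'⟩ := not_subset.mp hsub
  obtain ⟨g, hgE', hgF, hw, hF'⟩ := hF.exists_lighter_exchange hE' hnd hlight heF heE'
  have hcard : #(insert g (F.erase e) \ E') < n := by
    rw [← h, insert_sdiff_of_mem _ hgE', erase_sdiff_comm]
    exact card_erase_lt_of_mem (mem_sdiff.mpr ⟨heF, heE'⟩)
  obtain ⟨F₀, hF₀E', hF₀, hsum⟩ := ih _ hcard hF' rfl
  exact ⟨F₀, hF₀E', hF₀, hsum.trans (sum_insert_erase_lt hgF heF hw).le⟩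

theorem isMSF_iff_of_reachable_lighter (hE' : E' ⊆ E) (hnd : ∀ e ∈ E, ¬e.IsDiag)
    (hlight : ∀ ⦃u v⦄, s(u, v) ∈ E → s(u, v) ∉ E' →
      (fromEdgeSet {f | f ∈ E' ∧ w f < w s(u, v)}).Reachable u v) :
    IsMSF V w E F ↔ IsMSF V w E' F := by
  have hSF := fun F => isSpanningForest_iff_of_reachable_lighter (F := F) hE' hlight
  constructor
  · rintro ⟨hF, hmin⟩
    have hsub : F ⊆ E' := fun e heF => by_contra fun heE' => by
      obtain ⟨g, -, hgF, hw, hF'⟩ := hF.exists_lighter_exchange hE' hnd hlight heF heE'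
      exact (hmin _ hF').not_gt (sum_insert_erase_lt hgF heF hw)
    exact ⟨(hSF F).mpr ⟨hsub, hF⟩, fun F' hF' => hmin F' ((hSF F').mp hF').2⟩
  · rintro ⟨hF, hmin⟩
    refine ⟨((hSF F).mp hF).2, fun F' hF' => ?_⟩
    obtain ⟨F₀, hF₀E', hF₀, hsum⟩ := hF'.exists_subset_sum_le hE' hnd hlight
    exact (hmin F₀ ((hSF F₀).mpr ⟨hF₀E', hF₀⟩)).trans hsum

end Sparsification

theorem msf_union_eq_msf_of_msf_union_general {V : Type} [DecidableEq V]
    (E₁ E₂ F₁ F₂ : Finset (Sym2 V)) (w : Sym2 V → ℝ)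
    (hinj : Set.InjOn w (↑(E₁ ∪ E₂) : Set (Sym2 V)))
    (hnd : ∀ f ∈ E₁ ∪ E₂, ¬ f.IsDiag)
    (h₁ : IsMSF V w E₁ F₁) (h₂ : IsMSF V w E₂ F₂) :
    ∀ F : Finset (Sym2 V), IsMSF V w (E₁ ∪ E₂) F ↔ IsMSF V w (F₁ ∪ F₂) F := by
  intro F
  refine isMSF_iff_of_reachable_lighter (union_subset_union h₁.1.1 h₂.1.1) hnd
    fun u v he heF => ?_
  rcases mem_union.mp he with he | he
  · exact (h₁.reachable_lighter (hinj.mono (by simp)) he fun h => heF (mem_union_left _ h)).mono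
      (fromEdgeSet_mono fun f hf => ⟨mem_union_left _ hf.1, hf.2⟩)
  · exact (h₂.reachable_lighter (hinj.mono (by simp)) he fun h => heF (mem_union_right _ h)).mono
      (fromEdgeSet_mono fun f hf => ⟨mem_union_right _ hf.1, hf.2⟩)

/-- Sparsification correctness: if `F₁`, `F₂` are the MSFs of `(V, E₁)`, `(V, E₂)`
(with common injective weights), then the MSF of `(V, E₁ ∪ E₂)` coincides with the
MSF of `(V, F₁ ∪ F₂)`. -/
theorem msf_union_eq_msf_of_msf_union {V : Type} [Fintype V] [DecidableEq V]
    (E₁ E₂ F₁ F₂ : Finset (Sym2 V)) (w : Sym2 V → ℝ)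
    (hinj : Set.InjOn w (↑(E₁ ∪ E₂) : Set (Sym2 V)))
    (hnd : ∀ f ∈ E₁ ∪ E₂, ¬ f.IsDiag)
    (h₁ : IsMSF V w E₁ F₁) (h₂ : IsMSF V w E₂ F₂) :
    ∀ F : Finset (Sym2 V), IsMSF V w (E₁ ∪ E₂) F ↔ IsMSF V w (F₁ ∪ F₂) F :=
  msf_union_eq_msf_of_msf_union_general E₁ E₂ F₁ F₂ w hinj hnd h₁ h₂
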